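/- Let Y ⊆ ℝ^m be finite, y* ∈ Y, and Z ~ N(0, I_m). If θ̂ minimizes the perturbed loss L(θ) = E[max_{y ∈ Y}(θ+Z)ᵀy] − θᵀy* over ℝ^m, then E[argmax_{y ∈ Y}(θ̂+Z)ᵀy] = y*; i.e., at any minimizer, the expected perturbed CO-layer solution equals the target full-information solution. -/

import Mathlib

open scoped RealInnerProductSpace
open MeasureTheory

/-- `Z` is a standard Gaussian random vector in `ℝ^m`: its coordinates are independent
and each is distributed as `N(0,1)`. -/
def IsStdGaussian {Ω : Type*} [MeasurableSpace Ω] (μ : Measure Ω) {m : ℕ}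
    (Z : Ω → EuclideanSpace ℝ (Fin m)) : Prop :=
  (∀ i, Measure.map (fun ω => Z ω i) μ = ProbabilityTheory.gaussianReal 0 1) ∧
    ProbabilityTheory.iIndepFun (β := fun _ : Fin m => ℝ)
      (fun i ω => Z ω i) μ

open ProbabilityTheory Filter Topology

/-!
The expected maximum `F θ = 𝔼[max_{y ∈ Y} ⟪θ + Z, y⟫]` has the expected argmax
`G θ = 𝔼[g (θ + Z)]` as a subgradient at every `θ`, since `⟪·, g z⟫` supports the maximum at `z`.
Gaussian noise almost surely avoids the finitely many hyperplanes on which two points of `Y` tie,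
so `g` is almost surely locally constant at `θ + Z` and, by dominated convergence, `G` is
continuous. Comparing the loss at `θ̂ + t • v` and `θ̂` for `t ↓ 0` shows that a continuous
subgradient field vanishes at a minimizer, so `G θ̂ - y* = 0`.
-/

theorem IsMinOn.eq_zero_of_subgradient_of_continuousAt {E : Type*} [NormedAddCommGroup E]
    [InnerProductSpace ℝ E] {f : E → ℝ} {G : E → E} {x : E} (hmin : IsMinOn f Set.univ x)
    (hsub : ∀ y v, f y + ⟪v, G y⟫ ≤ f (y + v)) (hG : ContinuousAt G x) : G x = 0 := by
  have hdir : ∀ v, 0 ≤ ⟪v, G x⟫ := by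
    intro v
    have hpos : ∀ t > (0 : ℝ), 0 ≤ ⟪v, G (x + t • v)⟫ := by
      intro t ht
      have hstep := hsub (x + t • v) (-(t • v))
      rw [add_neg_cancel_right, inner_neg_left, real_inner_smul_left] at hstep
      have hle := isMinOn_univ_iff.1 hmin (x + t • v)
      exact nonneg_of_mul_nonneg_right (by linarith) ht
    have hline : Tendsto (fun t : ℝ => x + t • v) (𝓝 0) (𝓝 x) := by
      simpa using (by fun_prop : Continuous fun t : ℝ => x + t • v).tendsto 0
    have hlim := (tendsto_const_nhds (x := v)).inner (𝕜 := ℝ) ((hG.tendsto.comp hline).mono_left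
      (nhdsWithin_le_nhds (s := Set.Ioi 0)))
    exact ge_of_tendsto hlim (eventually_nhdsWithin_of_forall hpos)
  have hneg := hdir (-G x)
  rwa [inner_neg_left, neg_nonneg, real_inner_self_nonpos] at hneg

section ArgmaxSelector

variable {E : Type*} [NormedAddCommGroup E] [InnerProductSpace ℝ E] {Y : Finset E} {g : E → E}

lemma sup'_inner_eq_inner_of_isArgmax (hY : Y.Nonempty)
    (hg : ∀ z, g z ∈ Y ∧ ∀ y ∈ Y, ⟪z, y⟫ ≤ ⟪z, g z⟫) (z : E) :
    Y.sup' hY (fun y => ⟪z, y⟫) = ⟪z, g z⟫ :=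
  le_antisymm (Finset.sup'_le _ _ (hg z).2) (Finset.le_sup' (fun y => ⟪z, y⟫) (hg z).1)

lemma sup'_inner_add_inner_le (hY : Y.Nonempty)
    (hg : ∀ z, g z ∈ Y ∧ ∀ y ∈ Y, ⟪z, y⟫ ≤ ⟪z, g z⟫) (z v : E) :
    Y.sup' hY (fun y => ⟪z, y⟫) + ⟪v, g z⟫ ≤ Y.sup' hY (fun y => ⟪z + v, y⟫) := by
  rw [sup'_inner_eq_inner_of_isArgmax hY hg, ← inner_add_left]
  exact Finset.le_sup' (fun y => ⟪z + v, y⟫) (hg z).1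

lemma continuousAt_of_injOn_inner (hg : ∀ z, g z ∈ Y ∧ ∀ y ∈ Y, ⟪z, y⟫ ≤ ⟪z, g z⟫) {z : E}
    (hz : Set.InjOn (fun y => ⟪z, y⟫) Y) : ContinuousAt g z := by
  have hstrict : ∀ y ∈ Y, y ≠ g z → ⟪z, y⟫ < ⟪z, g z⟫ := fun y hy hne =>
    ((hg z).2 y hy).lt_of_ne fun h => hne (hz hy (hg z).1 h)
  have hopen : IsOpen {z' : E | ∀ y ∈ Y, y ≠ g z → ⟪z', y⟫ < ⟪z', g z⟫} := by
    simp only [Set.ofPred_forall]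
    exact isOpen_biInter_finset fun y _ =>
      isOpen_iInter_of_finite fun _ => isOpen_lt (by fun_prop) (by fun_prop)
  refine ContinuousAt.congr (f := fun _ => g z) continuousAt_const ?_
  filter_upwards [hopen.mem_nhds hstrict] with z' hz'
  by_contra hne
  exact ((hg z').2 _ (hg z).1).not_gt (hz' _ (hg z').1 (Ne.symm hne))

end ArgmaxSelector

lemma integrable_comp_const_add_of_mem {E : Type*} [NormedAddCommGroup E] [MeasurableSpace E]
    [BorelSpace E] [SecondCountableTopology E] {ν : Measure E} [IsFiniteMeasure ν] {Y : Finset E}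
    {g : E → E} (hgY : ∀ z, g z ∈ Y) (hgm : Measurable g) (θ : E) :
    Integrable (fun z => g (θ + z)) ν :=
  Integrable.of_bound (hgm.comp (measurable_const_add θ)).aestronglyMeasurable (∑ y ∈ Y, ‖y‖)
    (ae_of_all _ fun _ => Finset.single_le_sum (f := (‖·‖)) (fun y _ => norm_nonneg y) (hgY _))

section ExpectedArgmax

variable {E : Type*} [NormedAddCommGroup E] [InnerProductSpace ℝ E] [MeasurableSpace E]
  {ν : Measure E} {Y : Finset E} {g : E → E}

lemma ae_injOn_inner_add (hnull : ∀ d ≠ 0, ∀ c, ν {x | ⟪x, d⟫ = c} = 0) (θ : E) {S : Set E}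
    (hS : S.Finite) : ∀ᵐ z ∂ν, Set.InjOn (fun y => ⟪θ + z, y⟫) S := by
  simp only [Set.InjOn, eventually_all_finite hS]
  intro y _ y' _
  by_cases hyy' : y = y'
  · exact Eventually.of_forall fun _ _ => hyy'
  refine measure_mono_null (fun z hz => ?_) (hnull (y - y') (sub_ne_zero.2 hyy') (-⟪θ, y - y'⟫))
  obtain ⟨heq, -⟩ := Classical.not_imp.1 hz
  simp only [Set.mem_ofPred_eq, inner_sub_right]
  simp only [inner_add_left] at heq
  linarith

lemma integrable_sup'_inner_add [IsFiniteMeasure ν] (hint : Integrable id ν) (hY : Y.Nonempty)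
    (θ : E) : Integrable (fun z => Y.sup' hY fun y => ⟪θ + z, y⟫) ν := by
  have hsup : (fun z => Y.sup' hY fun y => ⟪θ + z, y⟫) = Y.sup' hY fun y z => ⟪θ + z, y⟫ := by
    ext z
    rw [Finset.sup'_apply]
  rw [hsup]
  exact Finset.sup'_induction (p := fun f => Integrable f ν) hY _ (fun _ h₁ _ h₂ => h₁.sup h₂)
    fun y _ => ((integrable_const θ).add hint).inner_const y

variable [BorelSpace E] [SecondCountableTopology E]

lemma continuousAt_integral_comp_const_add [IsFiniteMeasure ν]
    (hnull : ∀ d ≠ 0, ∀ c, ν {x | ⟪x, d⟫ = c} = 0)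
    (hg : ∀ z, g z ∈ Y ∧ ∀ y ∈ Y, ⟪z, y⟫ ≤ ⟪z, g z⟫) (hgm : Measurable g) (θ : E) :
    ContinuousAt (fun θ => ∫ z, g (θ + z) ∂ν) θ := by
  refine continuousAt_of_dominated (F := fun θ z => g (θ + z)) (bound := fun _ => ∑ y ∈ Y, ‖y‖)
    (Eventually.of_forall fun _ => (hgm.comp (measurable_const_add _)).aestronglyMeasurable)
    (Eventually.of_forall fun _ => ae_of_all _ fun _ => ?_) (integrable_const _) ?_
  · exact Finset.single_le_sum (f := (‖·‖)) (fun y _ => norm_nonneg y) (hg _).1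
  · filter_upwards [ae_injOn_inner_add hnull θ Y.finite_toSet] with z hz
    exact (continuousAt_of_injOn_inner hg hz).comp (f := (· + z))
      (continuous_add_const z).continuousAt

variable [CompleteSpace E]

lemma integral_sup'_inner_add_inner_le [IsFiniteMeasure ν] (hint : Integrable id ν)
    (hY : Y.Nonempty) (hg : ∀ z, g z ∈ Y ∧ ∀ y ∈ Y, ⟪z, y⟫ ≤ ⟪z, g z⟫) (hgm : Measurable g)
    (θ v : E) :
    ∫ z, Y.sup' hY (fun y => ⟪θ + z, y⟫) ∂ν + ⟪v, ∫ z, g (θ + z) ∂ν⟫ ≤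
      ∫ z, Y.sup' hY (fun y => ⟪θ + v + z, y⟫) ∂ν := by
  have hgi := integrable_comp_const_add_of_mem (fun z => (hg z).1) hgm θ (ν := ν)
  rw [← integral_inner hgi, ← integral_add (integrable_sup'_inner_add hint hY θ)
    (hgi.const_inner v)]
  refine integral_mono ((integrable_sup'_inner_add hint hY θ).add (hgi.const_inner v))
    (integrable_sup'_inner_add hint hY (θ + v)) fun z => ?_
  simpa only [add_right_comm θ z v] using sup'_inner_add_inner_le hY hg (θ + z) v

theorem integral_argmax_eq_of_isMinOn [IsFiniteMeasure ν] (hint : Integrable id ν)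
    (hnull : ∀ d ≠ 0, ∀ c, ν {x | ⟪x, d⟫ = c} = 0) (hY : Y.Nonempty)
    (hg : ∀ z, g z ∈ Y ∧ ∀ y ∈ Y, ⟪z, y⟫ ≤ ⟪z, g z⟫) (hgm : Measurable g) {ystar θhat : E}
    (hmin : IsMinOn (fun θ => ∫ z, Y.sup' hY (fun y => ⟪θ + z, y⟫) ∂ν - ⟪θ, ystar⟫)
      Set.univ θhat) :
    ∫ z, g (θhat + z) ∂ν = ystar := by
  refine sub_eq_zero.1 (hmin.eq_zero_of_subgradient_of_continuousAt (fun θ v => ?_)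
    ((continuousAt_integral_comp_const_add hnull hg hgm θhat).sub continuousAt_const))
  have hsub := integral_sup'_inner_add_inner_le hint hY hg hgm θ v
  simp only [Pi.sub_apply, inner_sub_right, inner_add_left] at hsub ⊢
  linarith

end ExpectedArgmax

lemma stdGaussian_setOf_inner_eq_eq_zero {E : Type*} [NormedAddCommGroup E]
    [InnerProductSpace ℝ E] [FiniteDimensional ℝ E] [MeasurableSpace E] [BorelSpace E] {d : E}
    (hd : d ≠ 0) (c : ℝ) :
    stdGaussian E {x | ⟪x, d⟫ = c} = 0 := by
  have hlaw : (stdGaussian E).map (innerSL ℝ d) = gaussianReal 0 (‖d‖ ^ 2).toNNReal := by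
    rw [IsGaussian.map_eq_gaussianReal, integral_strongDual_stdGaussian, variance_dual_stdGaussian,
      innerSL_apply_norm]
  have hset : {x | ⟪x, d⟫ = c} = innerSL ℝ d ⁻¹' {c} := by
    ext x
    simp [real_inner_comm]
  rw [hset, ← Measure.map_apply (innerSL ℝ d).continuous.measurable (measurableSet_singleton c),
    hlaw]
  exact gaussianReal_absolutelyContinuous 0 (by simpa using hd) (measure_singleton c)

lemma IsStdGaussian.map_eq_stdGaussian {Ω : Type*} [MeasurableSpace Ω] {μ : Measure Ω}
    [IsProbabilityMeasure μ] {m : ℕ} {Z : Ω → EuclideanSpace ℝ (Fin m)} (hZm : Measurable Z)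
    (hZ : IsStdGaussian μ Z) : μ.map Z = stdGaussian (EuclideanSpace ℝ (Fin m)) := by
  have hcoord : ∀ i, Measurable fun ω => Z ω i := fun i => by fun_prop
  calc μ.map Z = (μ.map fun ω i => Z ω i).map (WithLp.toLp 2) := by
        rw [Measure.map_map (by fun_prop) (by fun_prop)]
        rfl
    _ = (Measure.pi fun i => μ.map fun ω => Z ω i).map (WithLp.toLp 2) := by
        rw [(iIndepFun_iff_map_fun_eq_pi_map fun i => (hcoord i).aemeasurable).1 hZ.2]
    _ = stdGaussian (EuclideanSpace ℝ (Fin m)) := by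
        simp_rw [hZ.1]
        exact map_pi_eq_stdGaussian

theorem minimizer_expected_argmax_eq_target_general {m : ℕ} {Ω : Type*} [MeasurableSpace Ω]
    (μ : Measure Ω) [IsProbabilityMeasure μ]
    (Y : Finset (EuclideanSpace ℝ (Fin m))) (hY : Y.Nonempty)
    (ystar : EuclideanSpace ℝ (Fin m))
    (Z : Ω → EuclideanSpace ℝ (Fin m)) (hZmeas : Measurable Z)
    (hZ : IsStdGaussian μ Z)
    (g : EuclideanSpace ℝ (Fin m) → EuclideanSpace ℝ (Fin m))
    (hgmeas : Measurable g)
    (hg : ∀ z, g z ∈ Y ∧ ∀ y ∈ Y, ⟪z, y⟫ ≤ ⟪z, g z⟫)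
    (θhat : EuclideanSpace ℝ (Fin m))
    (hmin : ∀ θ : EuclideanSpace ℝ (Fin m),
      (∫ ω, Y.sup' hY (fun y => ⟪θhat + Z ω, y⟫) ∂μ) - ⟪θhat, ystar⟫ ≤
        (∫ ω, Y.sup' hY (fun y => ⟪θ + Z ω, y⟫) ∂μ) - ⟪θ, ystar⟫) :
    ∫ ω, g (θhat + Z ω) ∂μ = ystar := by
  have hlaw := hZ.map_eq_stdGaussian hZmeas
  have hsup : ∀ θ, ∫ ω, Y.sup' hY (fun y => ⟪θ + Z ω, y⟫) ∂μ =
      ∫ z, Y.sup' hY (fun y => ⟪θ + z, y⟫) ∂(stdGaussian _) := fun θ => by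
    rw [← hlaw, integral_map hZmeas.aemeasurable
      (Continuous.finset_sup'_apply hY fun y _ => by fun_prop).aestronglyMeasurable]
  rw [← integral_map (f := fun z => g (θhat + z)) hZmeas.aemeasurable
    (hgmeas.comp (measurable_const_add θhat)).aestronglyMeasurable, hlaw]
  refine integral_argmax_eq_of_isMinOn IsGaussian.integrable_id
    (fun d hd c => stdGaussian_setOf_inner_eq_eq_zero hd c) hY hg hgmeas
    (isMinOn_univ_iff.2 fun θ => ?_)
  simpa only [hsup] using hmin θ

/-- First-order optimality for the perturbed loss: if `θ̂` minimizes
`L(θ) = E[max_{y ∈ Y}(θ+Z)ᵀy] − θᵀy*` over `ℝ^m`, then the expected perturbed CO-layer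
solution equals the target full-information solution:
`E[argmax_{y ∈ Y}(θ̂+Z)ᵀy] = y*`. -/
theorem minimizer_expected_argmax_eq_target {m : ℕ} {Ω : Type*} [MeasurableSpace Ω]
    (μ : Measure Ω) [IsProbabilityMeasure μ]
    (Y : Finset (EuclideanSpace ℝ (Fin m))) (hY : Y.Nonempty)
    (ystar : EuclideanSpace ℝ (Fin m)) (hystar : ystar ∈ Y)
    (Z : Ω → EuclideanSpace ℝ (Fin m)) (hZmeas : Measurable Z)
    (hZ : IsStdGaussian μ Z)
    (g : EuclideanSpace ℝ (Fin m) → EuclideanSpace ℝ (Fin m))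
    (hgmeas : Measurable g)
    (hg : ∀ z, g z ∈ Y ∧ ∀ y ∈ Y, ⟪z, y⟫ ≤ ⟪z, g z⟫)
    (θhat : EuclideanSpace ℝ (Fin m))
    (hmin : ∀ θ : EuclideanSpace ℝ (Fin m),
      (∫ ω, Y.sup' hY (fun y => ⟪θhat + Z ω, y⟫) ∂μ) - ⟪θhat, ystar⟫ ≤
        (∫ ω, Y.sup' hY (fun y => ⟪θ + Z ω, y⟫) ∂μ) - ⟪θ, ystar⟫) :
    ∫ ω, g (θhat + Z ω) ∂μ = ystar :=
  minimizer_expected_argmax_eq_target_general μ Y hY ystar Z hZmeas hZ g hgmeas hg θhat hmin
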